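/- Let E be a C*-algebra, H a selfdual Hilbert right E-module, and K a Hilbert right E-submodule of H which is itself selfdual. Then there exists a projection p ∈ Pr L_E(H) with K = p(H). -/

import Mathlib

open scoped Topology

/-- The data of a Hilbert right `E`-module structure on a Banach space `H`,
where `E` is a C*-algebra over `𝕜 = ℝ` or `ℂ`: a right module action `smul : H → E → H`
and an `E`-valued inner product `inner : H → H → E`, `E`-linear in the first variable. -/
structure HilbertModuleData (𝕜 E H : Type*) [RCLike 𝕜]
    [NormedRing E] [StarRing E] [CStarRing E] [NormedAlgebra 𝕜 E] [StarModule 𝕜 E]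
    [CompleteSpace E] [PartialOrder E] [StarOrderedRing E]
    [NormedAddCommGroup H] [NormedSpace 𝕜 H] [CompleteSpace H] : Type _ where
  smul : H → E → H
  inner : H → H → E
  add_smul' : ∀ ξ η x, smul (ξ + η) x = smul ξ x + smul η x
  smul_add' : ∀ ξ x y, smul ξ (x + y) = smul ξ x + smul ξ y
  smul_mul' : ∀ ξ x y, smul ξ (x * y) = smul (smul ξ x) y
  smul_one' : ∀ ξ, smul ξ 1 = ξ
  smul_scalar' : ∀ (c : 𝕜) ξ x, smul (c • ξ) x = c • smul ξ x
  inner_add_left' : ∀ ξ η ζ, inner (ξ + η) ζ = inner ξ ζ + inner η ζ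
  inner_smul_left' : ∀ (c : 𝕜) ξ η, inner (c • ξ) η = c • inner ξ η
  inner_smul_module' : ∀ ξ x η, inner (smul ξ x) η = inner ξ η * x
  star_inner' : ∀ ξ η, star (inner ξ η) = inner η ξ
  inner_self_nonneg' : ∀ ξ, 0 ≤ inner ξ ξ
  norm_eq' : ∀ ξ, ‖ξ‖ ^ 2 = ‖inner ξ ξ‖
  inner_continuous' : ∀ η, Continuous fun ξ => inner ξ η

namespace HilbertModuleData

variable {𝕜 E H : Type*} [RCLike 𝕜]
    [NormedRing E] [StarRing E] [CStarRing E] [NormedAlgebra 𝕜 E] [StarModule 𝕜 E]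
    [CompleteSpace E] [PartialOrder E] [StarOrderedRing E]
    [NormedAddCommGroup H] [NormedSpace 𝕜 H] [CompleteSpace H]
    (M : HilbertModuleData 𝕜 E H)

lemma inner_add_right (ξ η ζ : H) :
    M.inner ξ (η + ζ) = M.inner ξ η + M.inner ξ ζ := by
  have h := congrArg star (M.inner_add_left' η ζ ξ)
  simpa [M.star_inner', star_add] using h

lemma inner_smul_right (c : 𝕜) (ξ η : H) :
    M.inner ξ (c • η) = star c • M.inner ξ η := by
  have h := congrArg star (M.inner_smul_left' c η ξ)
  simpa [M.star_inner', star_smul] using h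

/-- A bounded `E`-linear map (module morphism) from `H` to `E`. -/
def IsModuleMap (u : H →L[𝕜] E) : Prop := ∀ ξ x, u (M.smul ξ x) = u ξ * x

/-- `H` is selfdual: every bounded `E`-linear map `H → E` is `⟨·, η⟩` for some `η ∈ H`. -/
def Selfdual : Prop :=
  ∀ u : H →L[𝕜] E, M.IsModuleMap u → ∃ η, ∀ ζ, u ζ = M.inner ζ η

/-- A Hilbert right `E`-submodule of `H`: a (norm-)closed subspace stable under the
module action. -/
def IsHilbertSubmodule (K : Submodule 𝕜 H) : Prop :=
  (∀ ξ ∈ K, ∀ x : E, M.smul ξ x ∈ K) ∧ IsClosed (K : Set H)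

/-- Selfduality of a Hilbert right `E`-submodule `K` of `H`: every bounded `E`-linear
map `K → E` is `⟨·, η⟩` for some `η ∈ K`. -/
def SelfdualSub (K : Submodule 𝕜 H) : Prop :=
  ∀ u : K →L[𝕜] E,
    (∀ (ξ : K) (x : E) (h : M.smul (ξ : H) x ∈ K), u ⟨M.smul (ξ : H) x, h⟩ = u ξ * x) →
    ∃ η ∈ K, ∀ ζ : K, u ζ = M.inner (ζ : H) η

/-- An adjointable operator on `H`: an element of `L_E(H)`. -/
structure Adjointable : Type _ where
  toFun : H →L[𝕜] H
  adj : H →L[𝕜] H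
  inner_adj : ∀ ξ η, M.inner (toFun ξ) η = M.inner ξ (adj η)

variable {M}

/-- The identity operator in `L_E(H)`. -/
def idA : M.Adjointable := ⟨ContinuousLinearMap.id 𝕜 H, ContinuousLinearMap.id 𝕜 H, fun _ _ => rfl⟩

/-- Product in `L_E(H)`. -/
def mulA (u v : M.Adjointable) : M.Adjointable where
  toFun := u.toFun ∘L v.toFun
  adj := v.adj ∘L u.adj
  inner_adj := by
    intro ξ η
    simp only [ContinuousLinearMap.comp_apply]
    rw [u.inner_adj, v.inner_adj]

/-- Sum in `L_E(H)`. -/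
def addA (u v : M.Adjointable) : M.Adjointable where
  toFun := u.toFun + v.toFun
  adj := u.adj + v.adj
  inner_adj := by
    intro ξ η
    simp only [ContinuousLinearMap.add_apply]
    rw [M.inner_add_left', u.inner_adj, v.inner_adj, ← M.inner_add_right]

/-- Scalar multiple in `L_E(H)`. -/
def smulA (c : 𝕜) (u : M.Adjointable) : M.Adjointable where
  toFun := c • u.toFun
  adj := star c • u.adj
  inner_adj := by
    intro ξ η
    simp only [ContinuousLinearMap.smul_apply]
    rw [M.inner_smul_left', u.inner_adj, M.inner_smul_right, star_star]

/-- Adjoint (involution) in `L_E(H)`. -/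
def starA (u : M.Adjointable) : M.Adjointable where
  toFun := u.adj
  adj := u.toFun
  inner_adj := by
    intro ξ η
    have h := congrArg star (u.inner_adj η ξ)
    simpa [M.star_inner'] using h.symm

variable (M)

/-- The commutant of a subset of `L_E(H)`. -/
def commutant (F : Set M.Adjointable) : Set M.Adjointable :=
  {w | ∀ v ∈ F, w.toFun ∘L v.toFun = v.toFun ∘L w.toFun}

/-- `F` is an involutive subalgebra of `L_E(H)`. -/
def IsInvolutiveSubalgebra (F : Set M.Adjointable) : Prop :=
  (∀ u ∈ F, ∀ v ∈ F, addA u v ∈ F) ∧ (∀ u ∈ F, ∀ v ∈ F, mulA u v ∈ F) ∧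
    (∀ (c : 𝕜), ∀ u ∈ F, smulA c u ∈ F) ∧ (∀ u ∈ F, starA u ∈ F)

/-- `p ∈ Pr L_E(H)`: a self-adjoint idempotent adjointable operator. -/
def IsProjection (p : M.Adjointable) : Prop :=
  p.toFun ∘L p.toFun = p.toFun ∧ p.adj = p.toFun

variable {P : Type*} [NormedAddCommGroup P] [NormedSpace 𝕜 P]

/-- The weak topology `σ(H, Ḣ)` on `H`: the topology of pointwise convergence on the
functionals `ζ ↦ ⟨⟨ζ, ξ⟩, a⟩`, `a` in the predual of `E`, `ξ ∈ H`.
The predual of `E` is presented by a Banach space `P` together with an isometric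
isomorphism `eE : E ≃ P'`. -/
noncomputable def weakTopology (eE : E ≃ₗᵢ[𝕜] StrongDual 𝕜 P) : TopologicalSpace H :=
  ⨅ p : P × H,
    TopologicalSpace.induced (fun ζ : H => eE (M.inner ζ p.2) p.1) inferInstance

/-- The weak topology `σ(L_E(H), L̈(H))` on `L_E(H)`: the topology of pointwise
convergence on the functionals `u ↦ ⟨⟨u ξ, η⟩, a⟩`. -/
noncomputable def opWeakTopology (eE : E ≃ₗᵢ[𝕜] StrongDual 𝕜 P) : TopologicalSpace M.Adjointable :=
  ⨅ p : P × H × H,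
    TopologicalSpace.induced
      (fun w : M.Adjointable => eE (M.inner (w.toFun p.2.1) p.2.2) p.1) inferInstance

end HilbertModuleData

open HilbertModuleData

/-! For `ξ ∈ H` the functional `⟨·, ξ⟩` on `K` is represented by some `p ξ ∈ K`, unique because
`⟨η, η⟩ = 0` forces `η = 0`. Uniqueness makes `p` linear, idempotent and self-adjoint with
range `K`. Its graph is cut out by the closed conditions `q.2 ∈ K` and `⟨ζ, q.1⟩ = ⟨ζ, q.2⟩`
(`ζ ∈ K`), so `p` is bounded by the closed graph theorem. -/

namespace HilbertModuleData

variable {𝕜 E H : Type*} [RCLike 𝕜]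
    [NormedRing E] [StarRing E] [CStarRing E] [NormedAlgebra 𝕜 E] [StarModule 𝕜 E]
    [CompleteSpace E] [PartialOrder E] [StarOrderedRing E]
    [NormedAddCommGroup H] [NormedSpace 𝕜 H] [CompleteSpace H]
    (M : HilbertModuleData 𝕜 E H)

lemma inner_sub_left (ξ ξ' η : H) : M.inner (ξ - ξ') η = M.inner ξ η - M.inner ξ' η := by
  have hneg : M.inner (-ξ') η = -M.inner ξ' η := by simpa using M.inner_smul_left' (-1 : 𝕜) ξ' η
  rw [sub_eq_add_neg, M.inner_add_left', hneg, sub_eq_add_neg]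

lemma inner_sub_right (ξ η η' : H) : M.inner ξ (η - η') = M.inner ξ η - M.inner ξ η' := by
  simpa [M.star_inner', star_sub] using congrArg star (M.inner_sub_left η η' ξ)

lemma eq_zero_of_inner_self_eq_zero {ξ : H} (h : M.inner ξ ξ = 0) : ξ = 0 := by
  have hsq := M.norm_eq' ξ
  rw [h, norm_zero] at hsq
  exact norm_eq_zero.mp (pow_eq_zero_iff two_ne_zero |>.mp hsq)

lemma continuous_inner_right (ζ : H) : Continuous fun η : H => M.inner ζ η :=
  (continuous_star.comp (M.inner_continuous' ζ)).congr fun η => M.star_inner' η ζ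

lemma eq_of_forall_inner_eq {K : Submodule 𝕜 H} {η η' : H} (hη : η ∈ K) (hη' : η' ∈ K)
    (h : ∀ ζ ∈ K, M.inner ζ η = M.inner ζ η') : η = η' := by
  refine sub_eq_zero.mp (M.eq_zero_of_inner_self_eq_zero ?_)
  rw [M.inner_sub_right, h _ (K.sub_mem hη hη'), sub_self]

def innerRightOn (K : Submodule 𝕜 H) (ξ : H) : K →L[𝕜] E where
  toFun ζ := M.inner ζ ξ
  map_add' _ _ := M.inner_add_left' _ _ _
  map_smul' c ζ := M.inner_smul_left' c ζ ξ
  cont := (M.inner_continuous' ξ).comp continuous_subtype_val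

namespace SelfdualSub

variable {M} {K : Submodule 𝕜 H} (hK : M.SelfdualSub K)
include hK

lemma exists_mem_forall_inner_eq (ξ : H) : ∃ η ∈ K, ∀ ζ ∈ K, M.inner ζ ξ = M.inner ζ η := by
  obtain ⟨η, hηK, hη⟩ :=
    hK (M.innerRightOn K ξ) fun ζ x _ => M.inner_smul_module' (ζ : H) x ξ
  exact ⟨η, hηK, fun ζ hζ => hη ⟨ζ, hζ⟩⟩

noncomputable def proj (ξ : H) : H := (hK.exists_mem_forall_inner_eq ξ).choose

lemma proj_mem (ξ : H) : hK.proj ξ ∈ K := (hK.exists_mem_forall_inner_eq ξ).choose_spec.1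

lemma inner_proj (ξ : H) {ζ : H} (hζ : ζ ∈ K) : M.inner ζ (hK.proj ξ) = M.inner ζ ξ :=
  ((hK.exists_mem_forall_inner_eq ξ).choose_spec.2 ζ hζ).symm

lemma proj_eq_iff (ξ w : H) :
    hK.proj ξ = w ↔ w ∈ K ∧ ∀ ζ ∈ K, M.inner ζ ξ = M.inner ζ w := by
  constructor
  · rintro rfl
    exact ⟨hK.proj_mem ξ, fun ζ hζ => (hK.inner_proj ξ hζ).symm⟩
  · rintro ⟨hw, h⟩
    exact M.eq_of_forall_inner_eq (hK.proj_mem ξ) hw fun ζ hζ => (hK.inner_proj ξ hζ).trans (h ζ hζ)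

lemma proj_eq_self {η : H} (hη : η ∈ K) : hK.proj η = η :=
  (hK.proj_eq_iff η η).mpr ⟨hη, fun _ _ => rfl⟩

lemma inner_proj_left (ξ η : H) : M.inner (hK.proj ξ) η = M.inner ξ (hK.proj η) := by
  calc M.inner (hK.proj ξ) η = M.inner (hK.proj ξ) (hK.proj η) :=
        (hK.inner_proj η (hK.proj_mem ξ)).symm
    _ = star (M.inner (hK.proj η) ξ) := by rw [← hK.inner_proj ξ (hK.proj_mem η), M.star_inner']
    _ = M.inner ξ (hK.proj η) := M.star_inner' _ _

noncomputable def projₗ : H →ₗ[𝕜] H where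
  toFun := hK.proj
  map_add' ξ ξ' := (hK.proj_eq_iff _ _).mpr
    ⟨K.add_mem (hK.proj_mem ξ) (hK.proj_mem ξ'), fun ζ hζ => by
      rw [M.inner_add_right, M.inner_add_right, hK.inner_proj ξ hζ, hK.inner_proj ξ' hζ]⟩
  map_smul' c ξ := (hK.proj_eq_iff _ _).mpr
    ⟨K.smul_mem c (hK.proj_mem ξ), fun ζ hζ => by
      rw [RingHom.id_apply, M.inner_smul_right, M.inner_smul_right, hK.inner_proj ξ hζ]⟩

lemma isClosed_graph_projₗ (hKc : IsClosed (K : Set H)) :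
    IsClosed (hK.projₗ.graph : Set (H × H)) := by
  have hgraph : (hK.projₗ.graph : Set (H × H)) =
      {q | q.2 ∈ K} ∩ ⋂ ζ ∈ (K : Set H), {q | M.inner ζ q.1 = M.inner ζ q.2} := by
    ext q
    simp only [SetLike.mem_coe, LinearMap.mem_graph_iff, Set.mem_inter_iff, Set.mem_ofPred_eq,
      Set.mem_iInter, eq_comm (a := q.2)]
    exact hK.proj_eq_iff q.1 q.2
  rw [hgraph]
  exact (hKc.preimage continuous_snd).inter <| isClosed_biInter fun ζ _ =>
    isClosed_eq ((M.continuous_inner_right ζ).comp continuous_fst)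
      ((M.continuous_inner_right ζ).comp continuous_snd)

noncomputable def projAdjointable (hKc : IsClosed (K : Set H)) : M.Adjointable :=
  let p := ContinuousLinearMap.ofIsClosedGraph (hK.isClosed_graph_projₗ hKc)
  ⟨p, p, hK.inner_proj_left⟩

lemma isProjection_projAdjointable (hKc : IsClosed (K : Set H)) :
    M.IsProjection (hK.projAdjointable hKc) :=
  ⟨ContinuousLinearMap.ext fun ξ => hK.proj_eq_self (hK.proj_mem ξ), rfl⟩

lemma range_projAdjointable (hKc : IsClosed (K : Set H)) :
    Set.range (hK.projAdjointable hKc).toFun = K :=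
  Set.Subset.antisymm (Set.range_subset_iff.mpr hK.proj_mem)
    fun η hη => ⟨η, hK.proj_eq_self hη⟩

end SelfdualSub

end HilbertModuleData

variable {𝕜 E H P : Type*} [RCLike 𝕜]
    [NormedRing E] [StarRing E] [CStarRing E] [NormedAlgebra 𝕜 E] [StarModule 𝕜 E]
    [CompleteSpace E] [PartialOrder E] [StarOrderedRing E]
    [NormedAddCommGroup H] [NormedSpace 𝕜 H] [CompleteSpace H]
    [NormedAddCommGroup P] [NormedSpace 𝕜 P]
theorem exists_projection_of_selfdualSub_general
    (M : HilbertModuleData 𝕜 E H)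
    (K : Submodule 𝕜 H) (hK : M.IsHilbertSubmodule K) (hKsd : M.SelfdualSub K) :
    ∃ p : M.Adjointable, M.IsProjection p ∧ (K : Set H) = Set.range p.toFun :=
  ⟨hKsd.projAdjointable hK.2, hKsd.isProjection_projAdjointable hK.2,
    (hKsd.range_projAdjointable hK.2).symm⟩

/-- if `H` is selfdual and the Hilbert right `E`-submodule `K` is selfdual,
then `K = p(H)` for some projection `p ∈ Pr L_E(H)`. -/
theorem exists_projection_of_selfdualSub
    (M : HilbertModuleData 𝕜 E H) (hH : M.Selfdual)
    (K : Submodule 𝕜 H) (hK : M.IsHilbertSubmodule K) (hKsd : M.SelfdualSub K) :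
    ∃ p : M.Adjointable, M.IsProjection p ∧ (K : Set H) = Set.range p.toFun :=
  exists_projection_of_selfdualSub_general M K hK hKsd
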